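/- arXiv:1710.10057 — 9 statements merged into one kernel-verified Lean document; each statement's English description precedes it below -/
import Mathlib

section
/- For every real number x with 0 ≤ x ≤ 1, one has x + 0.38·x² ≤ (1 + x)·log(1 + x), where log denotes the natural logarithm. -/
/-!
With `t = x / (2 + x)` one has `1 + x = (1 + t) / (1 - t)`, so truncating the series
`log ((1 + t) / (1 - t)) = 2 ∑ t ^ (2k+1) / (2k+1)`, whose terms are nonnegative, gives
`log (1 + x) ≥ 2t + 2t³/3`. What remains is a rational inequality in `x` whose gap is `x²` times
a polynomial that is visibly nonnegative on `[0, 1]`.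
-/

open Real

theorem two_mul_add_two_div_three_mul_pow_three_le_log_sub_log {t : ℝ} (ht0 : 0 ≤ t)
    (ht1 : t < 1) : 2 * t + 2 / 3 * t ^ 3 ≤ log (1 + t) - log (1 - t) := by
  have hseries := hasSum_log_sub_log_of_abs_lt_one (abs_lt.mpr ⟨by linarith, ht1⟩)
  have hpartial := sum_le_hasSum (Finset.range 2) (fun k _ => by positivity) hseries
  norm_num [Finset.sum_range_succ] at hpartial
  linarith

theorem two_mul_div_add_le_log_one_add {x : ℝ} (hx : 0 ≤ x) :
    2 * (x / (2 + x)) + 2 / 3 * (x / (2 + x)) ^ 3 ≤ log (1 + x) := by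
  have h2x : 0 < 2 + x := by linarith
  have ht1 : x / (2 + x) < 1 := (div_lt_one h2x).mpr (by linarith)
  have hlog : log (1 + x / (2 + x)) - log (1 - x / (2 + x)) = log (1 + x) := by
    rw [← log_div (by positivity) (sub_pos.mpr ht1).ne']
    congr 1
    field_simp
    ring
  rw [← hlog]
  exact two_mul_add_two_div_three_mul_pow_three_le_log_sub_log (by positivity) ht1

/-- Claim: for 0 ≤ x ≤ 1, x + 0.38 x² ≤ (1+x) log(1+x). -/
theorem claim_038 (x : ℝ) (hx0 : 0 ≤ x) (hx1 : x ≤ 1) :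
    x + 0.38 * x ^ 2 ≤ (1 + x) * Real.log (1 + x) := by
  have h1x : 0 ≤ 1 - x := by linarith
  have hpoly : x + 0.38 * x ^ 2 ≤ (1 + x) * (2 * (x / (2 + x)) + 2 / 3 * (x / (2 + x)) ^ 3) := by
    have hgap : (1 + x) * (2 * (x / (2 + x)) + 2 / 3 * (x / (2 + x)) ^ 3) - (x + 0.38 * x ^ 2)
        = x ^ 2 * (11 + 133 * (1 - x) + 92 * x * (1 - x) + 57 * x * (1 - x) * (1 + x))
          / (150 * (2 + x) ^ 3) := by
      field_simp
      ring
    rw [← sub_nonneg, hgap]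
    positivity
  exact hpoly.trans (mul_le_mul_of_nonneg_left (two_mul_div_add_le_log_one_add hx0) (by linarith))
end

section
/- Let f : Finset α → ℝ be a nonnegative, monotone, submodular set function, let O be a finite set with |O| = k ≥ 1, and let i be a natural number with 0 ≤ i ≤ k. Then there exists a subset S ⊆ O with |S| ≤ i and f(S) ≥ (i/k)·f(O). -/
/-!
Submodularity makes marginal losses diminish, so the losses `f S - f (S \ {x})` of the elements
of `S` sum to at most `f S - f ∅ ≤ f S`. Hence some element of an `m`-element set can be removed
at the cost of at most a `1/m` fraction of its value, and removing elements of `O` one at a time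
keeps a `j/k` fraction of `f O` on a `j`-element subset.
-/

open Finset

section

variable {α : Type*} [DecidableEq α] {f : Finset α → ℝ}

theorem sub_erase_le_sub_erase_of_subset
    (hsub : ∀ A B, f (A ∪ B) + f (A ∩ B) ≤ f A + f B)
    {A B : Finset α} (hAB : A ⊆ B) {x : α} (hx : x ∈ A) :
    f B - f (B.erase x) ≤ f A - f (A.erase x) := by
  have hunion : A ∪ B.erase x = B := by grind
  have hinter : A ∩ B.erase x = A.erase x := by grind
  have := hsub A (B.erase x)
  rw [hunion, hinter] at this
  linarith

theorem sum_sub_erase_le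
    (hsub : ∀ A B, f (A ∪ B) + f (A ∩ B) ≤ f A + f B) (S : Finset α) :
    ∑ x ∈ S, (f S - f (S.erase x)) ≤ f S - f ∅ := by
  induction S using Finset.induction_on with
  | empty => simp
  | @insert a T ha ih =>
    have hdiminish : ∑ x ∈ T, (f (insert a T) - f ((insert a T).erase x))
        ≤ ∑ x ∈ T, (f T - f (T.erase x)) :=
      sum_le_sum fun x hx => sub_erase_le_sub_erase_of_subset hsub (subset_insert a T) hx
    rw [sum_insert ha, erase_insert ha]
    linarith

theorem exists_card_sub_one_mul_le_card_mul_erase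
    (hsub : ∀ A B, f (A ∪ B) + f (A ∩ B) ≤ f A + f B) (hempty : 0 ≤ f ∅)
    {S : Finset α} (hS : S.Nonempty) :
    ∃ x ∈ S, ((#S : ℝ) - 1) * f S ≤ #S * f (S.erase x) := by
  have hsum : ∑ x ∈ S, (#S : ℝ) * (f S - f (S.erase x)) ≤ ∑ _x ∈ S, f S := by
    rw [← mul_sum, sum_const, nsmul_eq_mul]
    have := sum_sub_erase_le hsub S
    gcongr
    linarith
  obtain ⟨x, hxS, hx⟩ := exists_le_of_sum_le hS hsum
  exact ⟨x, hxS, by linarith⟩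

theorem exists_subset_card_eq_mul_le
    (hsub : ∀ A B, f (A ∪ B) + f (A ∩ B) ≤ f A + f B) (hempty : 0 ≤ f ∅)
    (O : Finset α) {j : ℕ} (hj : j ≤ #O) :
    ∃ T ⊆ O, #T = j ∧ (j : ℝ) * f O ≤ #O * f T := by
  induction hj using Nat.decreasingInduction with
  | self => exact ⟨O, Subset.rfl, rfl, le_rfl⟩
  | of_succ j _ ih =>
    obtain ⟨T, hTO, hT, hfT⟩ := ih
    obtain ⟨x, hxT, hx⟩ := exists_card_sub_one_mul_le_card_mul_erase hsub hempty
      (S := T) (card_pos.mp (by omega))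
    refine ⟨T.erase x, (erase_subset x T).trans hTO, by rw [card_erase_of_mem hxT, hT]; rfl, ?_⟩
    rw [hT] at hx
    push_cast at hfT hx
    refine le_of_mul_le_mul_left ?_ (by positivity : (0 : ℝ) < j + 1)
    calc ((j : ℝ) + 1) * (j * f O) = j * ((j + 1) * f O) := by ring
      _ ≤ j * (#O * f T) := by gcongr
      _ = #O * ((j + 1 - 1) * f T) := by ring
      _ ≤ #O * ((j + 1) * f (T.erase x)) := by gcongr
      _ = (j + 1) * (#O * f (T.erase x)) := by ring

end

theorem restriction_lemma_general {α : Type*} [DecidableEq α] (f : Finset α → ℝ)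
    (hnn : ∀ A, 0 ≤ f A)
    (hsub : ∀ A B, f (A ∪ B) + f (A ∩ B) ≤ f A + f B)
    (O : Finset α) (k : ℕ) (hcard : O.card = k) (hk : 1 ≤ k)
    (i : ℕ) (hi : i ≤ k) :
    ∃ S ⊆ O, S.card ≤ i ∧ (i : ℝ) / (k : ℝ) * f O ≤ f S := by
  subst hcard
  obtain ⟨S, hSO, hS, hfS⟩ := exists_subset_card_eq_mul_le hsub (hnn ∅) O hi
  refine ⟨S, hSO, hS.le, ?_⟩
  rw [div_mul_eq_mul_div, div_le_iff₀ (by exact_mod_cast hk)]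
  linarith

/-- Restriction lemma: for a nonnegative monotone submodular f and |O| = k ≥ 1,
    for every 0 ≤ i ≤ k there is S ⊆ O with |S| ≤ i and f(S) ≥ (i/k)·f(O). -/
theorem restriction_lemma {α : Type*} [DecidableEq α] (f : Finset α → ℝ)
    (hnn : ∀ A, 0 ≤ f A)
    (hmono : ∀ A B, A ⊆ B → f A ≤ f B)
    (hsub : ∀ A B, f (A ∪ B) + f (A ∩ B) ≤ f A + f B)
    (O : Finset α) (k : ℕ) (hcard : O.card = k) (hk : 1 ≤ k)
    (i : ℕ) (hi : i ≤ k) :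
    ∃ S ⊆ O, S.card ≤ i ∧ (i : ℝ) / (k : ℝ) * f O ≤ f S :=
  restriction_lemma_general f hnn hsub O k hcard hk i hi
end

section
/- Let C be a finite set, let P_1, …, P_p ⊆ C, let u_1, …, u_p and k be natural numbers, and let Δ ≥ 1 be a natural number such that every element c ∈ C belongs to at most Δ of the groups P_i. Define B' = { S ⊆ C : |S| ≤ k and |S ∩ P_i| ≤ u_i for all i ∈ {1,…,p} }. Then (1) B' is downclosed: if S ⊆ T and T ∈ B' then S ∈ B'; and (2) B' is Δ-extendible: for all S, T ∈ B' with S ⊆ T and every c ∈ C with S ∪ {c} ∈ B', there exists Y ⊆ T \ S with |Y| ≤ Δ such that (T ∪ {c}) \ Y ∈ B'. -/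
lemma exists_mem_notMem' {α : Type*} {s t : Finset α} (h : s.card < t.card) :
    ∃ x, x ∈ t ∧ x ∉ s := by
  rcases Finset.not_subset.1 (fun hsub => absurd (Finset.card_le_card hsub) (not_le.2 h)) with ⟨x, hx1, hx2⟩
  exact ⟨x, hx1, hx2⟩

lemma aux_constraint {α : Type*} [DecidableEq α] (T Y Pi : Finset α) (ui : ℕ) (c : α)
    (hTu : (T ∩ Pi).card ≤ ui) (h : c ∈ Pi → (T ∩ Pi).card < ui) :
    (((insert c T) \ Y) ∩ Pi).card ≤ ui := by
  by_cases hci : c ∈ Pi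
  · have hsub : ((insert c T) \ Y) ∩ Pi ⊆ insert c (T ∩ Pi) := by
      intro x hx
      rw [Finset.mem_inter, Finset.mem_sdiff] at hx
      rcases Finset.mem_insert.1 hx.1.1 with rfl | h'
      · exact Finset.mem_insert_self _ _
      · exact Finset.mem_insert_of_mem (Finset.mem_inter.2 ⟨h', hx.2⟩)
    have hlt := h hci
    calc (((insert c T) \ Y) ∩ Pi).card ≤ (insert c (T ∩ Pi)).card :=
          Finset.card_le_card hsub
      _ ≤ (T ∩ Pi).card + 1 := Finset.card_insert_le _ _
      _ ≤ ui := by omega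
  · have hsub : ((insert c T) \ Y) ∩ Pi ⊆ T ∩ Pi := by
      intro x hx
      rw [Finset.mem_inter, Finset.mem_sdiff] at hx
      rcases Finset.mem_insert.1 hx.1.1 with rfl | h'
      · exact absurd hx.2 hci
      · exact Finset.mem_inter.2 ⟨h', hx.2⟩
    exact le_trans (Finset.card_le_card hsub) hTu

/-- The family B' of committees of size at most k satisfying all upper-bound
    fairness constraints is downclosed and Δ-extendible. -/
theorem extendible_system {α : Type*} [DecidableEq α] (C : Finset α) (p : ℕ)
    (P : Fin p → Finset α) (hP : ∀ i, P i ⊆ C)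
    (u : Fin p → ℕ) (k Δ : ℕ) (hΔ : 1 ≤ Δ)
    (hdeg : ∀ c ∈ C, (Finset.univ.filter fun i => c ∈ P i).card ≤ Δ)
    (B' : Finset α → Prop)
    (hB' : ∀ S, B' S ↔ S ⊆ C ∧ S.card ≤ k ∧ ∀ i, (S ∩ P i).card ≤ u i) :
    (∀ S T : Finset α, S ⊆ T → B' T → B' S) ∧
    (∀ S T : Finset α, B' S → B' T → S ⊆ T → ∀ c ∈ C, B' (insert c S) →
      ∃ Y ⊆ T \ S, Y.card ≤ Δ ∧ B' ((insert c T) \ Y)) := by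
  constructor
  · intro S T hST hT
    rw [hB'] at hT ⊢
    obtain ⟨h1, h2, h3⟩ := hT
    exact ⟨hST.trans h1, le_trans (Finset.card_le_card hST) h2,
      fun i => le_trans (Finset.card_le_card
        (Finset.inter_subset_inter hST (subset_refl _))) (h3 i)⟩
  · intro S T hS hT hST c hcC hSc
    by_cases hcT : c ∈ T
    · refine ⟨∅, Finset.empty_subset _, by simp, ?_⟩
      rw [Finset.insert_eq_self.2 hcT, Finset.sdiff_empty]
      exact hT
    · have hcS : c ∉ S := fun h => hcT (hST h)
      obtain ⟨hTC, hTk, hTu⟩ := (hB' T).1 hT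
      obtain ⟨hScC, hSck, hScu⟩ := (hB' _).1 hSc
      have hSck' : S.card + 1 ≤ k := by
        rwa [Finset.card_insert_of_notMem hcS] at hSck
      have hsubC : ∀ Y : Finset α, (insert c T) \ Y ⊆ C := by
        intro Y x hx
        rcases Finset.mem_insert.1 (Finset.mem_sdiff.1 hx).1 with rfl | h
        · exact hcC
        · exact hTC h
      set V := Finset.univ.filter (fun i => c ∈ P i ∧ u i ≤ (T ∩ P i).card) with hV
      have hy : ∀ i : Fin p, ∃ x, i ∈ V → x ∈ (T \ S) ∩ P i := by
        intro i
        by_cases h : i ∈ V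
        · simp only [hV, Finset.mem_filter] at h
          obtain ⟨-, hci, hui⟩ := h
          have h1 : (S ∩ P i).card < (T ∩ P i).card := by
            have h2 := hScu i
            rw [Finset.insert_inter_of_mem hci, Finset.card_insert_of_notMem
              (fun h => hcS (Finset.mem_inter.1 h).1)] at h2
            omega
          obtain ⟨x, hxT, hxS⟩ := exists_mem_notMem' h1
          rw [Finset.mem_inter] at hxT
          refine ⟨x, fun _ => ?_⟩
          rw [Finset.mem_inter, Finset.mem_sdiff]
          exact ⟨⟨hxT.1, fun h => hxS (Finset.mem_inter.2 ⟨h, hxT.2⟩)⟩, hxT.2⟩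
        · exact ⟨c, fun h' => absurd h' h⟩
      choose y hym using hy
      by_cases hVne : V.Nonempty
      · set Y0 := V.image y with hY0
        have hY0sub : Y0 ⊆ T \ S := by
          intro x hx
          simp only [hY0, Finset.mem_image] at hx
          obtain ⟨i, hi, rfl⟩ := hx
          exact (Finset.mem_inter.1 (hym i hi)).1
        have hVΔ : V.card ≤ Δ := by
          refine le_trans (Finset.card_le_card ?_) (hdeg c hcC)
          intro i hi
          simp only [hV, Finset.mem_filter] at hi ⊢
          exact ⟨hi.1, hi.2.1⟩
        refine ⟨Y0, hY0sub, le_trans Finset.card_image_le hVΔ, ?_⟩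
        rw [hB']
        refine ⟨hsubC Y0, ?_, ?_⟩
        · have hY0ne : Y0.Nonempty := hVne.image y
          have hsub : Y0 ⊆ insert c T := fun x hx =>
            Finset.mem_insert_of_mem ((Finset.mem_sdiff.1 (hY0sub hx)).1)
          have h1 : (insert c T).card = T.card + 1 := Finset.card_insert_of_notMem hcT
          have h2 : 1 ≤ Y0.card := Finset.card_pos.2 hY0ne
          rw [Finset.card_sdiff_of_subset hsub, h1]
          omega
        · intro i
          by_cases hiV : i ∈ V
          · have hyi := Finset.mem_inter.1 (hym i hiV)
            have hyiY : y i ∈ Y0 := Finset.mem_image_of_mem y hiV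
            have hyiP : y i ∈ P i := hyi.2
            have hyiT : y i ∈ T := (Finset.mem_sdiff.1 hyi.1).1
            have hsub2 : ((insert c T) \ Y0) ∩ P i ⊆ (insert c (T ∩ P i)) \ {y i} := by
              intro x hx
              rw [Finset.mem_inter, Finset.mem_sdiff] at hx
              obtain ⟨⟨hx1, hx2⟩, hx3⟩ := hx
              rw [Finset.mem_sdiff, Finset.mem_singleton]
              constructor
              · rcases Finset.mem_insert.1 hx1 with rfl | h'
                · exact Finset.mem_insert_self _ _
                · exact Finset.mem_insert_of_mem (Finset.mem_inter.2 ⟨h', hx3⟩)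
              · intro h; exact hx2 (h ▸ hyiY)
            have hc' : c ∉ T ∩ P i := fun h => hcT (Finset.mem_inter.1 h).1
            have hyi' : y i ∈ insert c (T ∩ P i) :=
              Finset.mem_insert_of_mem (Finset.mem_inter.2 ⟨hyiT, hyiP⟩)
            calc (((insert c T) \ Y0) ∩ P i).card
                ≤ ((insert c (T ∩ P i)) \ {y i}).card := Finset.card_le_card hsub2
              _ = (insert c (T ∩ P i)).card - 1 := by
                  rw [Finset.card_sdiff_of_subset (Finset.singleton_subset_iff.2 hyi'),
                    Finset.card_singleton]
              _ = (T ∩ P i).card := by rw [Finset.card_insert_of_notMem hc']; omega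
              _ ≤ u i := hTu i
          · refine aux_constraint T Y0 (P i) (u i) c (hTu i) (fun hci => ?_)
            by_contra hlt
            have : i ∈ V := by
              simp only [hV, Finset.mem_filter]
              exact ⟨Finset.mem_univ i, hci, by omega⟩
            exact hiV this
      · have hVempty : ∀ i, c ∈ P i → (T ∩ P i).card < u i := by
          intro i hci
          by_contra hlt
          have hiV : i ∈ V := by
            simp only [hV, Finset.mem_filter]
            exact ⟨Finset.mem_univ i, hci, by omega⟩
          exact hVne ⟨i, hiV⟩
        by_cases hTk' : T.card < k
        · refine ⟨∅, Finset.empty_subset _, by simp, ?_⟩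
          rw [hB']
          refine ⟨hsubC ∅, ?_, fun i => aux_constraint T ∅ (P i) (u i) c (hTu i) (hVempty i)⟩
          rw [Finset.sdiff_empty, Finset.card_insert_of_notMem hcT]
          omega
        · have hSk' : S.card < T.card := by omega
          obtain ⟨x, hxT, hxS⟩ := exists_mem_notMem' hSk'
          refine ⟨{x}, Finset.singleton_subset_iff.2 (Finset.mem_sdiff.2 ⟨hxT, hxS⟩),
            by simpa using hΔ, ?_⟩
          rw [hB']
          refine ⟨hsubC {x}, ?_, fun i => aux_constraint T {x} (P i) (u i) c (hTu i) (hVempty i)⟩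
          have hsub : ({x} : Finset α) ⊆ insert c T :=
            Finset.singleton_subset_iff.2 (Finset.mem_insert_of_mem hxT)
          rw [Finset.card_sdiff_of_subset hsub, Finset.card_insert_of_notMem hcT,
            Finset.card_singleton]
          omega
end

section
/- Let C be a finite set, let P_1, …, P_p ⊆ C be pairwise disjoint subsets, let ℓ_1, …, ℓ_p, u_1, …, u_p and k be natural numbers. Suppose there exists a function y : C → ℝ with 0 ≤ y(c) ≤ 1 for all c ∈ C, with ∑_{c ∈ C} y(c) = k, and with ℓ_j ≤ ∑_{c ∈ P_j} y(c) ≤ u_j for every j ∈ {1,…,p}. Then there exists a subset S ⊆ C with |S| = k and ℓ_j ≤ |S ∩ P_j| ≤ u_j for every j ∈ {1,…,p}. -/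
lemma sum_intermediate {ι : Type*} (s : Finset ι) (a b : ι → ℕ)
    (hab : ∀ i ∈ s, a i ≤ b i) :
    ∀ k, ∑ i ∈ s, a i ≤ k → k ≤ ∑ i ∈ s, b i →
      ∃ n : ι → ℕ, (∀ i ∈ s, a i ≤ n i ∧ n i ≤ b i) ∧ ∑ i ∈ s, n i = k := by
  classical
  induction s using Finset.induction_on with
  | empty =>
    intro k h1 h2
    simp only [Finset.sum_empty] at h1 h2 ⊢
    exact ⟨a, by simp, by omega⟩
  | @insert i s hi ih =>
    intro k h1 h2
    rw [Finset.sum_insert hi] at h1 h2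
    have hai : a i ≤ b i := hab i (Finset.mem_insert_self i s)
    have hsab : ∑ j ∈ s, a j ≤ ∑ j ∈ s, b j :=
      Finset.sum_le_sum fun j hj => hab j (Finset.mem_insert_of_mem hj)
    obtain ⟨m, hmk, hm1, hm2, h1', h2'⟩ :
        ∃ m, m ≤ k ∧ a i ≤ m ∧ m ≤ b i ∧ ∑ j ∈ s, a j ≤ k - m ∧ k - m ≤ ∑ j ∈ s, b j := by
      rcases le_total (b i) (k - ∑ j ∈ s, a j) with h | h
      · exact ⟨b i, by omega, by omega, le_rfl, by omega, by omega⟩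
      · exact ⟨k - ∑ j ∈ s, a j, by omega, by omega, by omega, by omega, by omega⟩
    obtain ⟨n, hn, hns⟩ := ih (fun j hj => hab j (Finset.mem_insert_of_mem hj)) (k - m) h1' h2'
    refine ⟨Function.update n i m, ?_, ?_⟩
    · intro j hj
      rcases Finset.mem_insert.mp hj with rfl | hj
      · simp [hm1, hm2]
      · rw [Function.update_of_ne (ne_of_mem_of_not_mem hj hi)]
        exact hn j hj
    · have hcong : ∑ x ∈ s, Function.update n i m x = ∑ x ∈ s, n x :=
        Finset.sum_congr rfl fun j hj =>
          Function.update_of_ne (ne_of_mem_of_not_mem hj hi) _ _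
      rw [Finset.sum_insert hi, Function.update_self, hcong, hns]
      omega

/-- Rounding for Δ = 1: any fractional point of the fairness polytope over
    pairwise disjoint groups can be rounded to a feasible integral committee. -/
theorem round_degree_one {α : Type*} [DecidableEq α] (C : Finset α) (p : ℕ)
    (P : Fin p → Finset α) (hP : ∀ i, P i ⊆ C)
    (hdisj : ∀ i j, i ≠ j → Disjoint (P i) (P j))
    (ℓ u : Fin p → ℕ) (k : ℕ) (y : α → ℝ)
    (hy0 : ∀ c ∈ C, 0 ≤ y c) (hy1 : ∀ c ∈ C, y c ≤ 1)
    (hsum : ∑ c ∈ C, y c = k)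
    (hfair : ∀ j, (ℓ j : ℝ) ≤ ∑ c ∈ P j, y c ∧ ∑ c ∈ P j, y c ≤ (u j : ℝ)) :
    ∃ S ⊆ C, S.card = k ∧
      ∀ j, ℓ j ≤ (S ∩ P j).card ∧ (S ∩ P j).card ≤ u j := by
  classical
  set B : Finset α := Finset.univ.biUnion P with hB
  have hBC : B ⊆ C := by
    intro x hx
    obtain ⟨i, -, hxi⟩ := Finset.mem_biUnion.mp hx
    exact hP i hxi
  set Q : Finset α := C \ B with hQ
  -- sum over B equals sum of group sums
  have hsumB : ∑ c ∈ B, y c = ∑ j : Fin p, ∑ c ∈ P j, y c := by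
    rw [hB, Finset.sum_biUnion]
    intro i hi j hj hij
    exact hdisj i j hij
  -- sum over C splits
  have hsplit : ∑ c ∈ C, y c = ∑ c ∈ B, y c + ∑ c ∈ Q, y c := by
    rw [hQ, add_comm, Finset.sum_sdiff hBC]
  -- group sums bounded by card
  have hcardb : ∀ j, ∑ c ∈ P j, y c ≤ ((P j).card : ℝ) := by
    intro j
    calc ∑ c ∈ P j, y c ≤ ∑ c ∈ P j, (1 : ℝ) :=
          Finset.sum_le_sum fun c hc => hy1 c (hP j hc)
      _ = ((P j).card : ℝ) := by simp
  -- ℓ j ≤ min (u j) (card (P j))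
  have hlb : ∀ j, ℓ j ≤ min (u j) (P j).card := by
    intro j
    have h1 : (ℓ j : ℝ) ≤ (u j : ℝ) := le_trans (hfair j).1 (hfair j).2
    have h2 : (ℓ j : ℝ) ≤ ((P j).card : ℝ) := le_trans (hfair j).1 (hcardb j)
    exact le_min (by exact_mod_cast h1) (by exact_mod_cast h2)
  -- ∑ ℓ ≤ k
  have hlk : ∑ j : Fin p, ℓ j ≤ k := by
    have h1 : (∑ j : Fin p, (ℓ j : ℝ)) ≤ ∑ c ∈ B, y c := by
      rw [hsumB]
      exact Finset.sum_le_sum fun j _ => (hfair j).1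
    have h2 : ∑ c ∈ B, y c ≤ (k : ℝ) := by
      have hQ0 : (0 : ℝ) ≤ ∑ c ∈ Q, y c :=
        Finset.sum_nonneg fun c hc => hy0 c (Finset.mem_sdiff.mp hc).1
      linarith [hsplit, hsum]
    have := le_trans h1 h2
    exact_mod_cast (by push_cast at this ⊢; exact this : ((∑ j : Fin p, ℓ j : ℕ) : ℝ) ≤ (k : ℝ))
  -- k ≤ ∑ min (u j) card + Q.card
  have hku : k ≤ Q.card + ∑ j : Fin p, min (u j) (P j).card := by
    have h1 : ∑ c ∈ B, y c ≤ ∑ j : Fin p, ((min (u j) (P j).card : ℕ) : ℝ) := by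
      rw [hsumB]
      refine Finset.sum_le_sum fun j _ => ?_
      rcases le_total (u j) (P j).card with h | h
      · rw [min_eq_left h]; exact (hfair j).2
      · rw [min_eq_right h]; exact hcardb j
    have h2 : ∑ c ∈ Q, y c ≤ (Q.card : ℝ) := by
      calc ∑ c ∈ Q, y c ≤ ∑ c ∈ Q, (1 : ℝ) :=
            Finset.sum_le_sum fun c hc => hy1 c (Finset.mem_sdiff.mp hc).1
        _ = (Q.card : ℝ) := by simp
    have h3 : (k : ℝ) ≤ (Q.card : ℝ) + ∑ j : Fin p, ((min (u j) (P j).card : ℕ) : ℝ) := by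
      linarith [hsplit, hsum]
    exact_mod_cast (by push_cast at h3 ⊢; exact h3 :
      ((k : ℕ) : ℝ) ≤ ((Q.card + ∑ j : Fin p, min (u j) (P j).card : ℕ) : ℝ))
  -- apply the intermediate value lemma on Option (Fin p)
  obtain ⟨n, hn, hns⟩ := sum_intermediate (Finset.univ : Finset (Option (Fin p)))
      (fun o => o.elim 0 ℓ) (fun o => o.elim Q.card (fun j => min (u j) (P j).card))
      (by rintro (_ | j) -
          · exact Nat.zero_le _
          · exact hlb j) k
      (by rw [Fintype.sum_option]; simpa using hlk)
      (by rw [Fintype.sum_option]; simpa using hku)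
  -- choose subsets
  have hTex : ∃ T ⊆ Q, T.card = n none := by
    refine Finset.exists_subset_card_eq ?_
    exact (hn none (Finset.mem_univ _)).2
  obtain ⟨T, hTQ, hTcard⟩ := hTex
  have hSex : ∀ j : Fin p, ∃ t ⊆ P j, t.card = n (some j) := by
    intro j
    refine Finset.exists_subset_card_eq (le_trans (hn (some j) (Finset.mem_univ _)).2 ?_)
    exact min_le_right _ _
  choose S hSP hScard using hSex
  refine ⟨T ∪ Finset.univ.biUnion S, ?_, ?_, ?_⟩
  · intro x hx
    rcases Finset.mem_union.mp hx with hx | hx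
    · exact (Finset.mem_sdiff.mp (hTQ hx)).1
    · obtain ⟨i, -, hxi⟩ := Finset.mem_biUnion.mp hx
      exact hP i (hSP i hxi)
  · have hdisjTB : Disjoint T (Finset.univ.biUnion S) := by
      rw [Finset.disjoint_left]
      intro x hxT hxB
      obtain ⟨i, -, hxi⟩ := Finset.mem_biUnion.mp hxB
      exact (Finset.mem_sdiff.mp (hTQ hxT)).2
        (Finset.mem_biUnion.mpr ⟨i, Finset.mem_univ _, hSP i hxi⟩)
    rw [Finset.card_union_of_disjoint hdisjTB, Finset.card_biUnion
      (fun i _ j _ hij => Finset.disjoint_of_subset_left (hSP i)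
        (Finset.disjoint_of_subset_right (hSP j) (hdisj i j hij)))]
    rw [hTcard]
    have : ∑ i : Fin p, (S i).card = ∑ i : Fin p, n (some i) :=
      Finset.sum_congr rfl fun i _ => hScard i
    rw [this]
    rw [Fintype.sum_option] at hns
    simpa using hns
  · intro j
    have hint : (T ∪ Finset.univ.biUnion S) ∩ P j = S j := by
      apply Finset.Subset.antisymm
      · intro x hx
        obtain ⟨hxS, hxP⟩ := Finset.mem_inter.mp hx
        rcases Finset.mem_union.mp hxS with hxT | hxB
        · exact absurd (Finset.mem_biUnion.mpr ⟨j, Finset.mem_univ _, hxP⟩)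
            (Finset.mem_sdiff.mp (hTQ hxT)).2
        · obtain ⟨i, -, hxi⟩ := Finset.mem_biUnion.mp hxB
          by_cases hij : i = j
          · exact hij ▸ hxi
          · exact absurd hxP (Finset.disjoint_left.mp
              (Finset.disjoint_of_subset_left (hSP i) (hdisj i j hij)) hxi)
      · intro x hx
        exact Finset.mem_inter.mpr
          ⟨Finset.mem_union_right _ (Finset.mem_biUnion.mpr ⟨j, Finset.mem_univ _, hx⟩),
           hSP j hx⟩
    rw [hint, hScard j]
    have := hn (some j) (Finset.mem_univ _)
    exact ⟨this.1, le_trans this.2 (min_le_left _ _)⟩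
end

section
/- Let f : Finset (Fin m) → ℝ be a submodular set function and let F : (Fin m → ℝ) → ℝ be its multilinear extension, F(y) = ∑_{R ⊆ Fin m} f(R) · ∏_{i ∈ R} y_i · ∏_{j ∉ R} (1 − y_j). Then for every y ∈ [0,1]^m (i.e., 0 ≤ y_l ≤ 1 for all l) and all indices i, j ∈ Fin m, the function t ↦ F(y + t(e_i − e_j)) is convex on ℝ, where e_i denotes the i-th standard basis vector. -/
open Finset

lemma MLC_quad_convex (a b c : ℝ) (ha : 0 ≤ a) :
    ConvexOn ℝ Set.univ (fun t : ℝ => a * t ^ 2 + b * t + c) := by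
  refine ⟨convex_univ, fun x _ z _ p q hp hq hpq => ?_⟩
  simp only [smul_eq_mul]
  have hq1 : q = 1 - p := by linarith
  have key : p * (a * x ^ 2 + b * x + c) + q * (a * z ^ 2 + b * z + c)
      - (a * (p * x + q * z) ^ 2 + b * (p * x + q * z) + c)
      = a * p * q * (x - z) ^ 2 := by subst hq1; ring
  nlinarith [mul_nonneg (mul_nonneg (mul_nonneg ha hp) hq) (sq_nonneg (x - z))]

/-- residual weight -/
def MLCW {m : ℕ} (f : Finset (Fin m) → ℝ) (y : Fin m → ℝ) (i j : Fin m)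
    (R : Finset (Fin m)) : ℝ :=
  f R * (∏ a ∈ (R.erase i).erase j, y a) * ∏ b ∈ ((Rᶜ).erase i).erase j, (1 - y b)

/-- coefficient of t^2 -/
def MLCA {m : ℕ} (f : Finset (Fin m) → ℝ) (y : Fin m → ℝ) (i j : Fin m)
    (R : Finset (Fin m)) : ℝ :=
  (if i ∈ R then (1:ℝ) else -1) * (if j ∈ R then (-1:ℝ) else 1) * MLCW f y i j R

def MLCB {m : ℕ} (f : Finset (Fin m) → ℝ) (y : Fin m → ℝ) (i j : Fin m)
    (R : Finset (Fin m)) : ℝ :=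
  ((if i ∈ R then y i else 1 - y i) * (if j ∈ R then (-1:ℝ) else 1) +
    (if j ∈ R then y j else 1 - y j) * (if i ∈ R then (1:ℝ) else -1)) * MLCW f y i j R

def MLCC {m : ℕ} (f : Finset (Fin m) → ℝ) (y : Fin m → ℝ) (i j : Fin m)
    (R : Finset (Fin m)) : ℝ :=
  (if i ∈ R then y i else 1 - y i) * (if j ∈ R then y j else 1 - y j) * MLCW f y i j R

lemma MLC_prod_split {m : ℕ} (i j : Fin m) (hij : i ≠ j) (R : Finset (Fin m))
    (u v : Fin m → ℝ) (huv : ∀ a, a ≠ i → a ≠ j → u a = v a) :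
    ∏ a ∈ R, u a =
      (if i ∈ R then u i else 1) * (if j ∈ R then u j else 1) *
        ∏ a ∈ (R.erase i).erase j, v a := by
  have hcong : ∏ a ∈ (R.erase i).erase j, u a = ∏ a ∈ (R.erase i).erase j, v a := by
    refine Finset.prod_congr rfl fun a ha => ?_
    simp only [Finset.mem_erase] at ha
    exact huv a ha.2.1 ha.1
  by_cases hi : i ∈ R <;> by_cases hj : j ∈ R
  · rw [if_pos hi, if_pos hj, ← hcong,
      ← Finset.mul_prod_erase R u hi,
      ← Finset.mul_prod_erase (R.erase i) u (Finset.mem_erase.mpr ⟨hij.symm, hj⟩), mul_assoc]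
  · have hje : j ∉ R.erase i := fun h => hj (Finset.mem_erase.mp h).2
    rw [Finset.erase_eq_of_notMem hje] at hcong ⊢
    rw [if_pos hi, if_neg hj, ← hcong, ← Finset.mul_prod_erase R u hi, mul_one]
  · rw [Finset.erase_eq_of_notMem hi] at hcong ⊢
    rw [if_neg hi, if_pos hj, ← hcong, ← Finset.mul_prod_erase R u hj, one_mul]
  · rw [Finset.erase_eq_of_notMem hi, Finset.erase_eq_of_notMem hj] at hcong ⊢
    rw [if_neg hi, if_neg hj, ← hcong, one_mul, one_mul]

/-- each term of the sum is a quadratic in t -/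
lemma MLC_term_eq {m : ℕ} (f : Finset (Fin m) → ℝ) (y : Fin m → ℝ) (i j : Fin m)
    (hij : i ≠ j) (t : ℝ) (z : Fin m → ℝ)
    (hza : ∀ a, a ≠ i → a ≠ j → z a = y a)
    (hzi : z i = y i + t) (hzj : z j = y j - t) (R : Finset (Fin m)) :
    f R * (∏ a ∈ R, z a) * ∏ b ∈ Rᶜ, (1 - z b)
      = MLCA f y i j R * t ^ 2 + MLCB f y i j R * t + MLCC f y i j R := by
  have h1 : ∏ a ∈ R, z a =
      ((if i ∈ R then z i else 1) * if j ∈ R then z j else 1) *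
        ∏ a ∈ (R.erase i).erase j, y a :=
    MLC_prod_split i j hij R z y hza
  have h2 : ∏ b ∈ Rᶜ, (1 - z b) =
      ((if i ∈ Rᶜ then 1 - z i else 1) * if j ∈ Rᶜ then 1 - z j else 1) *
        ∏ b ∈ (Rᶜ.erase i).erase j, (1 - y b) :=
    MLC_prod_split i j hij Rᶜ (fun b => 1 - z b) (fun b => 1 - y b)
      (fun a hai haj => by show 1 - z a = 1 - y a; rw [hza a hai haj])
  rw [h1, h2]
  simp only [MLCA, MLCB, MLCC, MLCW, Finset.mem_compl, hzi, hzj]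
  by_cases hi : i ∈ R <;> by_cases hj : j ∈ R <;>
    simp only [hi, hj, if_true, if_false, not_true, not_false_iff, ite_true, ite_false] <;>
    ring

lemma MLC_A_nonneg {m : ℕ} (f : Finset (Fin m) → ℝ)
    (hsub : ∀ A B, f (A ∪ B) + f (A ∩ B) ≤ f A + f B)
    (y : Fin m → ℝ) (hy : ∀ l, 0 ≤ y l ∧ y l ≤ 1) (i j : Fin m) (hij : i ≠ j) :
    0 ≤ ∑ R : Finset (Fin m), MLCA f y i j R := by
  classical
  set V : Finset (Fin m) := (Finset.univ.erase i).erase j with hV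
  have e2 : (Finset.univ.erase i : Finset (Fin m)) = insert j V :=
    (Finset.insert_erase (Finset.mem_erase.mpr ⟨hij.symm, Finset.mem_univ j⟩)).symm
  have e1 : (Finset.univ : Finset (Fin m)) = insert i (insert j V) := by
    rw [← e2]; exact (Finset.insert_erase (Finset.mem_univ i)).symm
  have hiV : i ∉ insert j V := by
    simp [hV, Finset.mem_insert, hij, Finset.mem_erase]
  have hjV : j ∉ V := Finset.notMem_erase j _
  have hsum : ∑ R : Finset (Fin m), MLCA f y i j R =
      ∑ S ∈ V.powerset, (MLCA f y i j S + MLCA f y i j (insert j S) +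
        (MLCA f y i j (insert i S) + MLCA f y i j (insert i (insert j S)))) := by
    calc ∑ R : Finset (Fin m), MLCA f y i j R
        = ∑ R ∈ (insert i (insert j V)).powerset, MLCA f y i j R := by
          rw [← e1, Finset.powerset_univ]
      _ = ∑ R ∈ (insert j V).powerset, MLCA f y i j R +
            ∑ R ∈ (insert j V).powerset, MLCA f y i j (insert i R) :=
          Finset.sum_powerset_insert hiV _
      _ = (∑ S ∈ V.powerset, MLCA f y i j S +
            ∑ S ∈ V.powerset, MLCA f y i j (insert j S)) +
          (∑ S ∈ V.powerset, MLCA f y i j (insert i S) +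
            ∑ S ∈ V.powerset, MLCA f y i j (insert i (insert j S))) := by
          rw [Finset.sum_powerset_insert hjV, Finset.sum_powerset_insert hjV]
      _ = _ := by rw [← Finset.sum_add_distrib, ← Finset.sum_add_distrib,
            ← Finset.sum_add_distrib]
  rw [hsum]
  refine Finset.sum_nonneg fun S hS => ?_
  have hSV : S ⊆ V := Finset.mem_powerset.mp hS
  have hiS : i ∉ S := fun h => by
    have := hSV h; rw [hV] at this; simp [Finset.mem_erase] at this
  have hjS : j ∉ S := fun h => by
    have := hSV h; rw [hV] at this; simp [Finset.mem_erase] at this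
  have hijS : i ∉ insert j S := by simp [Finset.mem_insert, hij, hiS]
  -- erase computations on the "inside" products
  have eq1 : (S.erase i).erase j = S := by
    rw [Finset.erase_eq_of_notMem hiS, Finset.erase_eq_of_notMem hjS]
  have eq2 : ((insert j S).erase i).erase j = S := by
    rw [Finset.erase_eq_of_notMem hijS, Finset.erase_insert hjS]
  have eq3 : ((insert i S).erase i).erase j = S := by
    rw [Finset.erase_insert hiS, Finset.erase_eq_of_notMem hjS]
  have eq4 : ((insert i (insert j S)).erase i).erase j = S := by
    rw [Finset.erase_insert hijS, Finset.erase_insert hjS]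
  -- erase computations on the "outside" products
  have c2 : (((insert j S)ᶜ).erase i).erase j = ((Sᶜ).erase i).erase j := by
    rw [Finset.compl_insert, Finset.erase_right_comm (a := j) (b := i) (s := Sᶜ), Finset.erase_idem]
  have c3 : (((insert i S)ᶜ).erase i).erase j = ((Sᶜ).erase i).erase j := by
    rw [Finset.compl_insert, Finset.erase_idem]
  have c4 : (((insert i (insert j S))ᶜ).erase i).erase j = ((Sᶜ).erase i).erase j := by
    rw [Finset.compl_insert, Finset.compl_insert, Finset.erase_idem,
      Finset.erase_right_comm (a := j) (b := i) (s := Sᶜ), Finset.erase_idem]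
  have hjiS : j ∉ insert i S := by simp [Finset.mem_insert, hij.symm, hjS]
  have key : MLCA f y i j S + MLCA f y i j (insert j S) +
      (MLCA f y i j (insert i S) + MLCA f y i j (insert i (insert j S)))
      = (f (insert i S) + f (insert j S) - f S - f (insert i (insert j S))) *
        ((∏ a ∈ S, y a) * ∏ b ∈ ((Sᶜ).erase i).erase j, (1 - y b)) := by
    simp only [MLCA, MLCW, eq1, eq2, eq3, eq4, c2, c3, c4, hiS, hjS, hijS, hjiS,
      Finset.mem_insert_self, Finset.mem_insert, hij, hij.symm, if_true, if_false,
      ite_true, ite_false, or_false, false_or, if_neg, eq_self_iff_true]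
    ring
  rw [key]
  have hun : insert i S ∪ insert j S = insert i (insert j S) := by
    ext x; simp [Finset.mem_union, Finset.mem_insert]; tauto
  have hin : insert i S ∩ insert j S = S := by
    ext x
    simp only [Finset.mem_inter, Finset.mem_insert]
    constructor
    · rintro ⟨hx1 | hx1, hx2 | hx2⟩
      · exact absurd (hx1 ▸ hx2 ▸ rfl : i = j) hij
      · exact absurd (hx1 ▸ hx2) hiS
      · exact absurd (hx2 ▸ hx1) hjS
      · exact hx1
    · exact fun h => ⟨Or.inr h, Or.inr h⟩
  have hsm := hsub (insert i S) (insert j S)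
  rw [hun, hin] at hsm
  refine mul_nonneg (by linarith) (mul_nonneg ?_ ?_)
  · exact Finset.prod_nonneg fun a _ => (hy a).1
  · exact Finset.prod_nonneg fun b _ => by linarith [(hy b).2]

/-- Convexity of the multilinear extension of a submodular function along
    directions e_i − e_j. -/
theorem multilinear_convex (m : ℕ) (f : Finset (Fin m) → ℝ)
    (hsub : ∀ A B, f (A ∪ B) + f (A ∩ B) ≤ f A + f B)
    (F : (Fin m → ℝ) → ℝ)
    (hF : ∀ z, F z = ∑ R : Finset (Fin m),
      f R * (∏ a ∈ R, z a) * ∏ b ∈ Rᶜ, (1 - z b))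
    (y : Fin m → ℝ) (hy : ∀ l, 0 ≤ y l ∧ y l ≤ 1) (i j : Fin m) :
    ConvexOn ℝ Set.univ
      (fun t : ℝ => F (y + t • (Pi.single i (1 : ℝ) - Pi.single j (1 : ℝ)))) := by
  classical
  by_cases hij : i = j
  · subst hij
    simp only [sub_self, smul_zero, add_zero]
    exact convexOn_const _ convex_univ
  · have hA := MLC_A_nonneg f hsub y hy i j hij
    have hfun : (fun t : ℝ => F (y + t • (Pi.single i (1 : ℝ) - Pi.single j (1 : ℝ))))
        = fun t : ℝ => (∑ R : Finset (Fin m), MLCA f y i j R) * t ^ 2 +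
            (∑ R : Finset (Fin m), MLCB f y i j R) * t +
            ∑ R : Finset (Fin m), MLCC f y i j R := by
      funext t
      set z : Fin m → ℝ := y + t • (Pi.single i (1:ℝ) - Pi.single j (1:ℝ)) with hz
      have hza : ∀ a, a ≠ i → a ≠ j → z a = y a := fun a hai haj => by
        simp [hz, Pi.single_eq_of_ne hai, Pi.single_eq_of_ne haj]
      have hzi : z i = y i + t := by
        simp [hz, Pi.single_eq_same, Pi.single_eq_of_ne hij]
      have hzj : z j = y j - t := by
        simp [hz, Pi.single_eq_same, Pi.single_eq_of_ne (Ne.symm hij)]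
        ring
      rw [hF]
      calc ∑ R : Finset (Fin m), f R * (∏ a ∈ R, z a) * ∏ b ∈ Rᶜ, (1 - z b)
          = ∑ R : Finset (Fin m),
              (MLCA f y i j R * t ^ 2 + MLCB f y i j R * t + MLCC f y i j R) :=
            Finset.sum_congr rfl fun R _ => MLC_term_eq f y i j hij t z hza hzi hzj R
        _ = _ := by
            rw [Finset.sum_add_distrib, Finset.sum_add_distrib, ← Finset.sum_mul,
              ← Finset.sum_mul]
    rw [hfun]
    exact MLC_quad_convex _ _ _ hA
end

section
/- Let C be a finite set, let P_1, …, P_p ⊆ C, and let ℓ_1, …, ℓ_p, u_1, …, u_p, k be natural numbers with ℓ_i ≤ u_i for all i. For each i, let γ_i = |{ c ∈ P_i : c ∉ P_j for all j ≠ i }| be the number of candidates whose only group is P_i. If γ_i ≥ ℓ_i for every i, ∑_{i=1}^p ℓ_i ≤ k, and ∑_{i=1}^p min(γ_i, u_i) ≥ k, then there exists a subset S ⊆ C with |S| = k and ℓ_i ≤ |S ∩ P_i| ≤ u_i for every i ∈ {1,…,p}. -/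
/-!
Each group `P i` owns `γ i` candidates that lie in no other group. Choose target sizes
`ℓ i ≤ t i ≤ min (γ i) (u i)` summing to `k`, and take `t i` of the candidates owned by `P i`.
Since those candidates meet no other group, the resulting committee meets `P i` in exactly
`t i` members and has `∑ t i = k` members.
-/

open Finset

theorem Finset.exists_le_le_sum_eq {ι : Type*} {ℓ m : ι → ℕ} {s : Finset ι} {k : ℕ}
    (hℓm : ∀ i ∈ s, ℓ i ≤ m i) (hℓk : ∑ i ∈ s, ℓ i ≤ k) (hkm : k ≤ ∑ i ∈ s, m i) :
    ∃ t : ι → ℕ, (∀ i ∈ s, ℓ i ≤ t i ∧ t i ≤ m i) ∧ ∑ i ∈ s, t i = k := by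
  classical
  induction s using Finset.induction_on generalizing k with
  | empty => exact ⟨fun _ => 0, by simp, by simpa [eq_comm] using hkm⟩
  | @insert a s ha ih =>
    rw [sum_insert ha] at hℓk hkm
    have hℓm_s : ∀ i ∈ s, ℓ i ≤ m i := fun i hi => hℓm i (mem_insert_of_mem hi)
    have hℓm_a : ℓ a ≤ m a := hℓm a (mem_insert_self a s)
    have hsum_s : ∑ i ∈ s, ℓ i ≤ ∑ i ∈ s, m i := sum_le_sum hℓm_s
    -- the smallest admissible value at `a` that the rest of `s` can still complement
    set ta := max (ℓ a) (k - ∑ i ∈ s, m i) with hta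
    obtain ⟨t, ht, ht_sum⟩ := ih hℓm_s (k := k - ta) (by omega) (by omega)
    refine ⟨Function.update t a ta, fun i hi => ?_, ?_⟩
    · rcases mem_insert.mp hi with rfl | hi
      · simp only [Function.update_self]
        omega
      · rw [Function.update_of_ne (ne_of_mem_of_not_mem hi ha)]
        exact ht i hi
    · rw [sum_insert ha, Function.update_self,
        sum_congr rfl fun i hi => Function.update_of_ne (ne_of_mem_of_not_mem hi ha) ta t,
        ht_sum]
      omega

section SingleType

variable {ι α : Type*} [Fintype ι] [DecidableEq ι] [DecidableEq α]

def singleType (P : ι → Finset α) (i : ι) : Finset α :=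
  (P i).filter fun c => ∀ j, j ≠ i → c ∉ P j

theorem singleType_subset (P : ι → Finset α) (i : ι) : singleType P i ⊆ P i :=
  filter_subset _ _

theorem notMem_of_mem_singleType {P : ι → Finset α} {i j : ι} {c : α}
    (hc : c ∈ singleType P i) (hji : j ≠ i) : c ∉ P j :=
  (mem_filter.mp hc).2 j hji

variable {P S : ι → Finset α}

theorem biUnion_inter_eq_of_subset_singleType (hS : ∀ i, S i ⊆ singleType P i) (i : ι) :
    univ.biUnion S ∩ P i = S i := by
  ext c
  simp only [mem_inter, mem_biUnion, mem_univ, true_and]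
  constructor
  · rintro ⟨⟨j, hcj⟩, hci⟩
    obtain rfl : j = i :=
      by_contra fun hji => notMem_of_mem_singleType (hS j hcj) (Ne.symm hji) hci
    exact hcj
  · exact fun hc => ⟨⟨i, hc⟩, singleType_subset P i (hS i hc)⟩

theorem card_biUnion_of_subset_singleType (hS : ∀ i, S i ⊆ singleType P i) :
    #(univ.biUnion S) = ∑ i, #(S i) := by
  refine card_biUnion fun i _ j _ hij => disjoint_left.mpr fun c hci hcj => ?_
  exact notMem_of_mem_singleType (hS i hci) (Ne.symm hij) (singleType_subset P j (hS j hcj))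

end SingleType

/-- The single type condition ensures feasibility. -/
theorem single_type_feasible {α : Type*} [DecidableEq α] (C : Finset α) (p : ℕ)
    (P : Fin p → Finset α) (hP : ∀ i, P i ⊆ C)
    (ℓ u : Fin p → ℕ) (k : ℕ) (hlu : ∀ i, ℓ i ≤ u i)
    (γ : Fin p → ℕ)
    (hγ : ∀ i, γ i = ((P i).filter fun c => ∀ j, j ≠ i → c ∉ P j).card)
    (h1 : ∀ i, ℓ i ≤ γ i)
    (h2 : ∑ i, ℓ i ≤ k)
    (h3 : k ≤ ∑ i, min (γ i) (u i)) :
    ∃ S ⊆ C, S.card = k ∧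
      ∀ i, ℓ i ≤ (S ∩ P i).card ∧ (S ∩ P i).card ≤ u i := by
  -- the two sides differ only in the `Decidable` instance of the filter predicate
  have hγ_eq : ∀ i, γ i = #(singleType P i) := fun i => by rw [hγ i, singleType]; congr!
  obtain ⟨t, ht, ht_sum⟩ := exists_le_le_sum_eq (s := univ)
    (fun i _ => le_min (h1 i) (hlu i)) h2 h3
  have ht_le : ∀ i, t i ≤ #(singleType P i) := fun i =>
    ((ht i (mem_univ i)).2.trans (min_le_left _ _)).trans_eq (hγ_eq i)
  choose S hS hS_card using fun i => exists_subset_card_eq (ht_le i)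
  refine ⟨univ.biUnion S, biUnion_subset.mpr fun i _ =>
    (hS i).trans ((singleType_subset P i).trans (hP i)), ?_, fun i => ?_⟩
  · rw [card_biUnion_of_subset_singleType hS, ← ht_sum]
    exact sum_congr rfl fun i _ => hS_card i
  · rw [biUnion_inter_eq_of_subset_singleType hS, hS_card]
    exact ⟨(ht i (mem_univ i)).1, (ht i (mem_univ i)).2.trans (min_le_right _ _)⟩
end

section
/- Let C be a finite set, P_1, …, P_p ⊆ C, u_1, …, u_p and k natural numbers. Suppose S₁ ⊆ C satisfies |S₁| ≤ k and |S₁ ∩ P_i| ≤ u_i for all i, and suppose Ŝ ⊆ C satisfies |Ŝ| = k and |Ŝ ∩ P_i| ≤ u_i for all i. Then there exists S ⊆ C with S₁ ⊆ S, |S| = k, and |S ∩ P_i| ≤ 2·u_i for every i ∈ {1,…,p}. -/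
/-- Padding a partial committee up to size k using a feasible committee,
    violating each upper bound by at most a factor of 2. -/
theorem padding_step {α : Type*} [DecidableEq α] (C : Finset α) (p : ℕ)
    (P : Fin p → Finset α) (u : Fin p → ℕ) (k : ℕ)
    (S₁ : Finset α) (hS₁C : S₁ ⊆ C) (hS₁card : S₁.card ≤ k)
    (hS₁fair : ∀ i, (S₁ ∩ P i).card ≤ u i)
    (Shat : Finset α) (hShatC : Shat ⊆ C) (hShatcard : Shat.card = k)
    (hShatfair : ∀ i, (Shat ∩ P i).card ≤ u i) :
    ∃ S ⊆ C, S₁ ⊆ S ∧ S.card = k ∧ ∀ i, (S ∩ P i).card ≤ 2 * u i := by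
  obtain ⟨T, hTsub, hTcard⟩ : ∃ T ⊆ Shat \ S₁, T.card = k - S₁.card := by
    apply Finset.exists_subset_card_eq
    have := Finset.le_card_sdiff S₁ Shat
    omega
  have hdisj : Disjoint S₁ T := by
    refine Finset.disjoint_left.mpr fun a ha haT => ?_
    exact (Finset.mem_sdiff.mp (hTsub haT)).2 ha
  refine ⟨S₁ ∪ T, ?_, Finset.subset_union_left, ?_, fun i => ?_⟩
  · exact Finset.union_subset hS₁C (fun a ha => hShatC (Finset.mem_sdiff.mp (hTsub ha)).1)
  · rw [Finset.card_union_of_disjoint hdisj, hTcard]; omega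
  · calc ((S₁ ∪ T) ∩ P i).card = (S₁ ∩ P i ∪ T ∩ P i).card := by
          rw [Finset.union_inter_distrib_right]
      _ ≤ (S₁ ∩ P i).card + (T ∩ P i).card := Finset.card_union_le _ _
      _ ≤ u i + (Shat ∩ P i).card := by
          gcongr
          · exact hS₁fair i
          · exact fun a ha => (Finset.mem_sdiff.mp (hTsub ha)).1
      _ ≤ 2 * u i := by have := hShatfair i; omega
end

section
/- Let C be a finite set, let P_1, …, P_p be pairwise disjoint subsets of C whose union is C, let ℓ_1, …, ℓ_p, u_1, …, u_p and k be natural numbers, and let w : C → ℝ be a weight function. Then for every S ⊆ C with |S| = k and ℓ_i ≤ |S ∩ P_i| ≤ u_i for every i, there exists S' ⊆ C with |S'| = k, |S' ∩ P_i| = |S ∩ P_i| for every i (so S' also satisfies all fairness constraints), ∑_{c ∈ S'} w(c) ≥ ∑_{c ∈ S} w(c), and for each i ∈ {1,…,p}, w(c) ≥ w(d) for every c ∈ S' ∩ P_i and every d ∈ P_i \ S'. In particular, among all committees of size k satisfying the fairness constraints, the maximum total weight is attained by a committee that, within each group, consists of elements of largest weight. -/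
/-- In any finset `T`, for `n ≤ |T|` there is a subset of size `n` of maximal
weight, and it consists of heaviest elements. -/
lemma exists_heavy {α : Type*} [DecidableEq α] (w : α → ℝ) (T : Finset α) (n : ℕ)
    (hn : n ≤ T.card) :
    ∃ A ⊆ T, A.card = n ∧ (∀ B ⊆ T, B.card = n → ∑ c ∈ B, w c ≤ ∑ c ∈ A, w c) ∧
      ∀ c ∈ A, ∀ d ∈ T \ A, w d ≤ w c := by
  obtain ⟨A, hAmem, hmax⟩ := (T.powersetCard n).exists_max_image (fun B => ∑ c ∈ B, w c)
    ((T.powersetCard_nonempty).mpr hn)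
  rw [Finset.mem_powersetCard] at hAmem
  obtain ⟨hAT, hAcard⟩ := hAmem
  refine ⟨A, hAT, hAcard, ?_, ?_⟩
  · intro B hBT hBcard
    exact hmax B (Finset.mem_powersetCard.mpr ⟨hBT, hBcard⟩)
  · intro c hc d hd
    rw [Finset.mem_sdiff] at hd
    by_contra hlt
    push_neg at hlt
    set B := insert d (A.erase c) with hB
    have hdA : d ∉ A.erase c := fun h => hd.2 (Finset.mem_of_mem_erase h)
    have hBT : B ⊆ T := by
      intro x hx
      rcases Finset.mem_insert.mp hx with rfl | hx
      · exact hd.1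
      · exact hAT (Finset.mem_of_mem_erase hx)
    have hBcard : B.card = n := by
      have h1 : 0 < A.card := Finset.card_pos.mpr ⟨c, hc⟩
      rw [hAcard] at h1
      rw [hB, Finset.card_insert_of_notMem hdA, Finset.card_erase_of_mem hc, hAcard]
      omega
    have hsum : ∑ x ∈ B, w x = w d + (∑ x ∈ A, w x - w c) := by
      rw [hB, Finset.sum_insert hdA, Finset.sum_erase_eq_sub hc]
    have := hmax B (Finset.mem_powersetCard.mpr ⟨hBT, hBcard⟩)
    simp only [hsum] at this
    linarith

/-- Exchange property for constrained SNTV when the groups partition C: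
    any feasible committee can be replaced by one with the same group counts,
    at least as large total weight, that picks heaviest elements in each group. -/
theorem sntv_exchange {α : Type*} [DecidableEq α] (C : Finset α) (p : ℕ)
    (P : Fin p → Finset α) (hP : ∀ i, P i ⊆ C)
    (hdisj : ∀ i j, i ≠ j → Disjoint (P i) (P j))
    (hcover : ∀ c ∈ C, ∃ i, c ∈ P i)
    (ℓ u : Fin p → ℕ) (k : ℕ) (w : α → ℝ)
    (S : Finset α) (hS : S ⊆ C) (hcard : S.card = k)
    (hfair : ∀ i, ℓ i ≤ (S ∩ P i).card ∧ (S ∩ P i).card ≤ u i) :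
    ∃ S' ⊆ C, S'.card = k ∧
      (∀ i, (S' ∩ P i).card = (S ∩ P i).card) ∧
      (∑ c ∈ S, w c ≤ ∑ c ∈ S', w c) ∧
      ∀ i, ∀ c ∈ S' ∩ P i, ∀ d ∈ P i \ S', w d ≤ w c := by
  -- choose, for each group, a heaviest subset of the right size
  have hchoose : ∀ i : Fin p, ∃ A ⊆ P i, A.card = (S ∩ P i).card ∧
      (∀ B ⊆ P i, B.card = (S ∩ P i).card → ∑ c ∈ B, w c ≤ ∑ c ∈ A, w c) ∧
      ∀ c ∈ A, ∀ d ∈ P i \ A, w d ≤ w c := by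
    intro i
    exact exists_heavy w (P i) (S ∩ P i).card
      (Finset.card_le_card (Finset.inter_subset_right))
  choose A hAsub hAcard hAmax hAheavy using hchoose
  set S' : Finset α := Finset.biUnion Finset.univ A with hS'
  have hA_pdisj : ∀ i j : Fin p, i ≠ j → Disjoint (A i) (A j) := fun i j hij =>
    (hdisj i j hij).mono (hAsub i) (hAsub j)
  have hS'sub : S' ⊆ C := by
    intro x hx
    obtain ⟨i, _, hxA⟩ := Finset.mem_biUnion.mp hx
    exact hP i (hAsub i hxA)
  -- S' ∩ P i = A i
  have hS'int : ∀ i, S' ∩ P i = A i := by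
    intro i
    apply Finset.Subset.antisymm
    · intro x hx
      rw [Finset.mem_inter] at hx
      obtain ⟨j, _, hxA⟩ := Finset.mem_biUnion.mp hx.1
      by_cases hij : j = i
      · exact hij ▸ hxA
      · exact absurd hx.2 (Finset.disjoint_left.mp (hdisj j i hij) (hAsub j hxA))
    · intro x hx
      exact Finset.mem_inter.mpr ⟨Finset.mem_biUnion.mpr ⟨i, Finset.mem_univ i, hx⟩,
        hAsub i hx⟩
  -- S decomposes into its group pieces
  have hSdecomp : S = Finset.biUnion Finset.univ (fun i => S ∩ P i) := by
    apply Finset.Subset.antisymm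
    · intro x hx
      obtain ⟨i, hi⟩ := hcover x (hS hx)
      exact Finset.mem_biUnion.mpr ⟨i, Finset.mem_univ i, Finset.mem_inter.mpr ⟨hx, hi⟩⟩
    · intro x hx
      obtain ⟨i, _, hxi⟩ := Finset.mem_biUnion.mp hx
      exact (Finset.mem_inter.mp hxi).1
  have hSP_pdisj : ∀ i ∈ (Finset.univ : Finset (Fin p)), ∀ j ∈ Finset.univ, i ≠ j →
      Disjoint (S ∩ P i) (S ∩ P j) := fun i _ j _ hij =>
    (hdisj i j hij).mono Finset.inter_subset_right Finset.inter_subset_right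
  have hA_pdisj' : ∀ i ∈ (Finset.univ : Finset (Fin p)), ∀ j ∈ Finset.univ, i ≠ j →
      Disjoint (A i) (A j) := fun i _ j _ hij => hA_pdisj i j hij
  have hS'card : S'.card = k := by
    rw [hS', Finset.card_biUnion hA_pdisj']
    conv_rhs => rw [← hcard, hSdecomp, Finset.card_biUnion hSP_pdisj]
    exact Finset.sum_congr rfl (fun i _ => hAcard i)
  refine ⟨S', hS'sub, hS'card, fun i => by rw [hS'int i, hAcard i], ?_, ?_⟩
  · -- sum comparison
    calc ∑ c ∈ S, w c = ∑ i, ∑ c ∈ S ∩ P i, w c := by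
          conv_lhs => rw [hSdecomp, Finset.sum_biUnion hSP_pdisj]
      _ ≤ ∑ i, ∑ c ∈ A i, w c := by
          apply Finset.sum_le_sum
          intro i _
          exact hAmax i (S ∩ P i) Finset.inter_subset_right rfl
      _ = ∑ c ∈ S', w c := by rw [hS', Finset.sum_biUnion hA_pdisj']
  · intro i c hc d hd
    rw [hS'int i] at hc
    apply hAheavy i c hc d
    rw [Finset.mem_sdiff] at hd ⊢
    exact ⟨hd.1, fun h => hd.2 (Finset.mem_biUnion.mpr ⟨i, Finset.mem_univ i, h⟩)⟩
end

section
/- Let C be a finite set, let P_1, …, P_p be pairwise disjoint subsets of C, and let n_1, …, n_p be natural numbers with n = ∑_{i=1}^p n_i > 0. Let k be a natural number and suppose |P_i| ≥ ⌈k·n_i/n⌉ for every i ∈ {1,…,p}. Then there exists a subset S ⊆ C with |S| = k and ⌊k·n_i/n⌋ ≤ |S ∩ P_i| ≤ ⌈k·n_i/n⌉ for every i ∈ {1,…,p}. -/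
lemma floor_sub_bounds (x y : ℝ) :
    ⌊y⌋ ≤ ⌊x + y⌋ - ⌊x⌋ ∧ ⌊x + y⌋ - ⌊x⌋ ≤ ⌈y⌉ := by
  constructor
  · have h : ((⌊x⌋ + ⌊y⌋ : ℤ) : ℝ) ≤ x + y := by
      push_cast
      exact add_le_add (Int.floor_le x) (Int.floor_le y)
    have := Int.le_floor.2 h
    omega
  · have h1 : (⌊x + y⌋ : ℝ) ≤ x + y := Int.floor_le _
    have h2 : x < ⌊x⌋ + 1 := Int.lt_floor_add_one x
    have h3 : y ≤ ⌈y⌉ := Int.le_ceil y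
    have h : (⌊x + y⌋ : ℝ) < (⌊x⌋ + ⌈y⌉ + 1 : ℤ) := by push_cast; linarith
    have := Int.cast_lt.mp h
    omega

/-- Feasibility of fully proportional representation constraints:
    ⌊k·n_i/n⌋ ≤ |S ∩ P_i| ≤ ⌈k·n_i/n⌉ for pairwise disjoint groups with
    |P_i| ≥ ⌈k·n_i/n⌉. -/
theorem proportional_feasible {α : Type*} [DecidableEq α] (C : Finset α) (p : ℕ)
    (P : Fin p → Finset α) (hP : ∀ i, P i ⊆ C)
    (hdisj : ∀ i j, i ≠ j → Disjoint (P i) (P j))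
    (nv : Fin p → ℕ) (n : ℕ) (hn : n = ∑ i, nv i) (hnpos : 0 < n) (k : ℕ)
    (hsize : ∀ i, ⌈((k * nv i : ℕ) : ℝ) / n⌉ ≤ ((P i).card : ℤ)) :
    ∃ S ⊆ C, S.card = k ∧
      ∀ i, ⌊((k * nv i : ℕ) : ℝ) / n⌋ ≤ ((S ∩ P i).card : ℤ) ∧
        ((S ∩ P i).card : ℤ) ≤ ⌈((k * nv i : ℕ) : ℝ) / n⌉ := by
  have hn0 : (n : ℝ) ≠ 0 := by positivity
  set nv' : ℕ → ℕ := fun j => if h : j < p then nv ⟨j, h⟩ else 0 with hnv'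
  set g : ℕ → ℕ := fun t => ∑ j ∈ Finset.range t, nv' j with hg
  set f : ℕ → ℤ := fun t => ⌊((k * g t : ℕ) : ℝ) / n⌋ with hf
  have hgp : g p = n := by
    rw [hn, hg]
    show ∑ j ∈ Finset.range p, nv' j = ∑ i : Fin p, nv i
    rw [← Fin.sum_univ_eq_sum_range]
    apply Finset.sum_congr rfl
    intro i _
    simp [hnv', i.isLt]
  have hf0 : f 0 = 0 := by simp [hf, hg]
  have hfp : f p = k := by
    rw [hf]
    simp only [hgp]
    rw [show ((k * n : ℕ) : ℝ) / n = (k : ℝ) by push_cast; field_simp]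
    exact Int.floor_natCast k
  have hgsucc : ∀ i : Fin p, g (i + 1) = g i + nv i := by
    intro i
    rw [hg]
    simp only [Finset.sum_range_succ]
    congr 1
    simp [hnv', i.isLt]
  have hsplit : ∀ i : Fin p,
      ((k * g (i + 1) : ℕ) : ℝ) / n
        = ((k * g i : ℕ) : ℝ) / n + ((k * nv i : ℕ) : ℝ) / n := by
    intro i
    rw [hgsucc i]
    push_cast
    ring
  have key : ∀ i : Fin p,
      ⌊((k * nv i : ℕ) : ℝ) / n⌋ ≤ f (i + 1) - f i ∧
        f (i + 1) - f i ≤ ⌈((k * nv i : ℕ) : ℝ) / n⌉ := by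
    intro i
    have := floor_sub_bounds (((k * g i : ℕ) : ℝ) / n) (((k * nv i : ℕ) : ℝ) / n)
    rw [hf]
    simp only [hsplit i]
    exact this
  have hfloor_nonneg : ∀ i : Fin p, (0 : ℤ) ≤ ⌊((k * nv i : ℕ) : ℝ) / n⌋ := by
    intro i
    apply Int.floor_nonneg.2
    positivity
  set c : Fin p → ℕ := fun i => (f (i + 1) - f i).toNat with hc
  have hc_cast : ∀ i, (c i : ℤ) = f (i + 1) - f i := by
    intro i
    rw [hc]
    exact Int.toNat_of_nonneg (le_trans (hfloor_nonneg i) (key i).1)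
  have hsum : ∑ i, (c i : ℤ) = (k : ℤ) := by
    calc ∑ i, (c i : ℤ) = ∑ i : Fin p, (f (i + 1) - f i) := by
          exact Finset.sum_congr rfl fun i _ => hc_cast i
      _ = ∑ t ∈ Finset.range p, (f (t + 1) - f t) := by
          rw [← Fin.sum_univ_eq_sum_range (fun t => f (t + 1) - f t) p]
      _ = f p - f 0 := Finset.sum_range_sub f p
      _ = (k : ℤ) := by rw [hfp, hf0]; ring
  have hsumnat : ∑ i, c i = k := by exact_mod_cast (by push_cast at hsum ⊢; exact hsum : ((∑ i, c i : ℕ) : ℤ) = (k : ℤ))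
  have hc_le : ∀ i, c i ≤ (P i).card := by
    intro i
    have : (c i : ℤ) ≤ ((P i).card : ℤ) :=
      (hc_cast i ▸ (key i).2).trans (hsize i)
    exact_mod_cast this
  choose T hTsub hTcard using fun i => Finset.exists_subset_card_eq (hc_le i)
  refine ⟨Finset.univ.biUnion T, ?_, ?_, ?_⟩
  · intro x hx
    obtain ⟨i, _, hxi⟩ := Finset.mem_biUnion.1 hx
    exact hP i (hTsub i hxi)
  · rw [Finset.card_biUnion]
    · simp only [hTcard, hsumnat]
    · intro i _ j _ hij
      exact (hdisj i j hij).mono (hTsub i) (hTsub j)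
  · intro i
    have hinter : Finset.univ.biUnion T ∩ P i = T i := by
      apply Finset.Subset.antisymm
      · intro x hx
        obtain ⟨hxS, hxP⟩ := Finset.mem_inter.1 hx
        obtain ⟨j, _, hxj⟩ := Finset.mem_biUnion.1 hxS
        rcases eq_or_ne j i with rfl | hne
        · exact hxj
        · exact absurd (Finset.mem_inter.2 ⟨hTsub j hxj, hxP⟩)
            (by simpa using (hdisj j i hne).forall_ne_finset (hTsub j hxj) hxP)
      · intro x hx
        exact Finset.mem_inter.2
          ⟨Finset.mem_biUnion.2 ⟨i, Finset.mem_univ i, hx⟩, hTsub i hx⟩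
    rw [hinter, hTcard, hc_cast]
    exact key i
end
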